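/- Let ⋆ and ⋆′ be Hermitian star products on a Poisson manifold M. If ⋆ and ⋆′ are equivalent, i.e. there exists T = id + Σ_{r≥1} λ^r T_r with T(f) ⋆′ T(g) = T(f ⋆ g), then they are *-equivalent: there exists an equivalence U of the same form additionally satisfying U(conj(f)) = conj(U(f)). -/

import Mathlib

/- STATEMENT 8: Let ⋆ and ⋆′ be Hermitian star products on a Poisson manifold M.  If
   they are equivalent via T = id + Σ_{r≥1} λ^r T_r (with T(f ⋆ g) = T(f) ⋆′ T(g)),
   then they are *-equivalent: there is an equivalence U of the same form which in
   addition commutes with complex conjugation.  Operators T = Σ λ^r T_r on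
   C∞(M)[[λ]] are modeled by their coefficient family T_r : C∞(M) → C∞(M) (additive
   maps), acting on series by (T a)_n = Σ_{i+j=n} T_i(a_j); T_0 = id. -/
open scoped Manifold
open Complex

noncomputable section

instance : ContMDiffRing 𝓘(ℝ, ℂ) (⊤ : ℕ∞) ℂ :=
  { instNormedSpaceLieAddGroup with
    contMDiff_mul := by
      rw [contMDiff_iff]
      refine ⟨continuous_mul, fun x y => ?_⟩
      simp only [mfld_simps, chartAt_self_eq]
      rw [contDiffOn_univ]
      exact contDiff_mul }

variable {EE HH : Type*} [NormedAddCommGroup EE] [NormedSpace ℝ EE]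
  [TopologicalSpace HH] {I : ModelWithCorners ℝ EE HH}
  {M : Type*} [TopologicalSpace M] [ChartedSpace HH M] [IsManifold I (⊤ : ℕ∞) M]

/-- Smooth complex-valued functions on the manifold `M`. -/
local notation "Cinf" => ContMDiffMap I 𝓘(ℝ, ℂ) M ℂ (⊤ : ℕ∞)

/-- The constant smooth function. -/
def constF (I : ModelWithCorners ℝ EE HH) (M : Type*) [TopologicalSpace M]
    [ChartedSpace HH M] (c : ℂ) : ContMDiffMap I 𝓘(ℝ, ℂ) M ℂ (⊤ : ℕ∞) :=
  ⟨fun _ => c, contMDiff_const⟩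

/-- The unit `1 ∈ C∞(M)[[λ]]`. -/
def unitS (I : ModelWithCorners ℝ EE HH) (M : Type*) [TopologicalSpace M]
    [ChartedSpace HH M] [IsManifold I (⊤ : ℕ∞) M] :
    ℕ → ContMDiffMap I 𝓘(ℝ, ℂ) M ℂ (⊤ : ℕ∞) :=
  fun n => if n = 0 then 1 else 0

/-- Extension of the bidifferential cochains `C_r` to a `ℂ[[λ]]`-bilinear product
on `C∞(M)[[λ]]`. -/
def smulS (C : ℕ → ContMDiffMap I 𝓘(ℝ, ℂ) M ℂ (⊤ : ℕ∞) → ContMDiffMap I 𝓘(ℝ, ℂ) M ℂ (⊤ : ℕ∞) →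
    ContMDiffMap I 𝓘(ℝ, ℂ) M ℂ (⊤ : ℕ∞))
    (a b : ℕ → ContMDiffMap I 𝓘(ℝ, ℂ) M ℂ (⊤ : ℕ∞)) : ℕ → ContMDiffMap I 𝓘(ℝ, ℂ) M ℂ (⊤ : ℕ∞) :=
  fun n => ∑ p ∈ Finset.Nat.antidiagonalTuple 3 n, C (p 0) (a (p 1)) (b (p 2))

/-- `C` is the family of cochains of a (ℂ[[λ]]-bilinear, associative, unital)
star product on `M`, deforming the pointwise product. -/
def IsStarProduct
    (C : ℕ → ContMDiffMap I 𝓘(ℝ, ℂ) M ℂ (⊤ : ℕ∞) → ContMDiffMap I 𝓘(ℝ, ℂ) M ℂ (⊤ : ℕ∞) →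
      ContMDiffMap I 𝓘(ℝ, ℂ) M ℂ (⊤ : ℕ∞)) : Prop :=
  (∀ f g, C 0 f g = f * g) ∧
  (∀ r f f' g, C r (f + f') g = C r f g + C r f' g) ∧
  (∀ r f g g', C r f (g + g') = C r f g + C r f g') ∧
  (∀ r (c : ℂ) f g, C r (constF I M c * f) g = constF I M c * C r f g) ∧
  (∀ r (c : ℂ) f g, C r f (constF I M c * g) = constF I M c * C r f g) ∧
  (∀ a b c, smulS C (smulS C a b) c = smulS C a (smulS C b c)) ∧
  (∀ a, smulS C (unitS I M) a = a) ∧ (∀ a, smulS C a (unitS I M) = a)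

/-- `e : ℝ → C∞(M)[[λ]]` is the star exponential family `t ↦ Exp(tH)`:
the solution of `d/dt e(t) = H ⋆ e(t)`, `e(0) = 1`, the ODE being read
coefficientwise in λ and pointwise on `M`. -/
def IsStarExpFamily
    (C : ℕ → ContMDiffMap I 𝓘(ℝ, ℂ) M ℂ (⊤ : ℕ∞) → ContMDiffMap I 𝓘(ℝ, ℂ) M ℂ (⊤ : ℕ∞) →
      ContMDiffMap I 𝓘(ℝ, ℂ) M ℂ (⊤ : ℕ∞))
    (Hs : ℕ → ContMDiffMap I 𝓘(ℝ, ℂ) M ℂ (⊤ : ℕ∞))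
    (e : ℝ → ℕ → ContMDiffMap I 𝓘(ℝ, ℂ) M ℂ (⊤ : ℕ∞)) : Prop :=
  e 0 = unitS I M ∧
  ∀ (t : ℝ) (r : ℕ) (x : M),
    HasDerivAt (fun s : ℝ => (e s r : M → ℂ) x) ((smulS C Hs (e t) r : M → ℂ) x) t

/-- Complex conjugation of a smooth complex-valued function. -/
def cconj (I : ModelWithCorners ℝ EE HH) (M : Type*) [TopologicalSpace M]
    [ChartedSpace HH M] (f : ContMDiffMap I 𝓘(ℝ, ℂ) M ℂ (⊤ : ℕ∞)) :
    ContMDiffMap I 𝓘(ℝ, ℂ) M ℂ (⊤ : ℕ∞) :=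
  ⟨fun x => (starRingEnd ℂ) (f x),
    ((Complex.conjCLE : ℂ ≃L[ℝ] ℂ) : ℂ →L[ℝ] ℂ).contMDiff.comp f.contMDiff⟩

/-- Coefficientwise complex conjugation on C∞(M)[[λ]]. -/
def cconjS (I : ModelWithCorners ℝ EE HH) (M : Type*) [TopologicalSpace M]
    [ChartedSpace HH M] (a : ℕ → ContMDiffMap I 𝓘(ℝ, ℂ) M ℂ (⊤ : ℕ∞)) :
    ℕ → ContMDiffMap I 𝓘(ℝ, ℂ) M ℂ (⊤ : ℕ∞) :=
  fun n => cconj I M (a n)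

/-- The action of a formal series of operators T = Σ λ^r T_r on C∞(M)[[λ]]. -/
def opSeries (T : ℕ → ContMDiffMap I 𝓘(ℝ, ℂ) M ℂ (⊤ : ℕ∞) → ContMDiffMap I 𝓘(ℝ, ℂ) M ℂ (⊤ : ℕ∞))
    (a : ℕ → ContMDiffMap I 𝓘(ℝ, ℂ) M ℂ (⊤ : ℕ∞)) : ℕ → ContMDiffMap I 𝓘(ℝ, ℂ) M ℂ (⊤ : ℕ∞) :=
  fun n => ∑ p ∈ Finset.HasAntidiagonal.antidiagonal n, T p.1 (a p.2)

/-! ### Auxiliary development for Statement 8. -/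

section Aux
set_option linter.unusedSectionVars false
set_option linter.unusedVariables false

/-- Pointwise application lemma for `cconj`. -/
lemma cconj_apply (f : Cinf) (x : M) : cconj I M f x = (starRingEnd ℂ) (f x) := rfl

lemma constF_apply (c : ℂ) (x : M) : constF I M c x = c := rfl

lemma cconj_add (u v : Cinf) : cconj I M (u + v) = cconj I M u + cconj I M v :=
  ContMDiffMap.ext fun x => by
    simp [cconj_apply, map_add]

/-- `cconj` as an additive monoid hom. -/
def cconjHom (I : ModelWithCorners ℝ EE HH) (M : Type*) [TopologicalSpace M]
    [ChartedSpace HH M] [IsManifold I (⊤ : ℕ∞) M] : ContMDiffMap I 𝓘(ℝ, ℂ) M ℂ (⊤ : ℕ∞) →+ ContMDiffMap I 𝓘(ℝ, ℂ) M ℂ (⊤ : ℕ∞) :=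
  AddMonoidHom.mk' (cconj I M) cconj_add

lemma cconj_sum {α : Type*} (s : Finset α) (g : α → Cinf) :
    cconj I M (∑ i ∈ s, g i) = ∑ i ∈ s, cconj I M (g i) :=
  map_sum (cconjHom I M) g s

lemma cconj_cconj (f : Cinf) : cconj I M (cconj I M f) = f :=
  ContMDiffMap.ext fun x => by simp [cconj_apply]

lemma cconj_zero : cconj I M (0 : Cinf) = 0 := map_zero (cconjHom I M)

lemma cconjS_cconjS (a : ℕ → Cinf) : cconjS I M (cconjS I M a) = a :=
  funext fun n => cconj_cconj _

lemma sum_apply' {α : Type*} (s : Finset α) (g : α → Cinf) (x : M) :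
    (∑ i ∈ s, g i) x = ∑ i ∈ s, g i x := by
  have h : ((∑ i ∈ s, g i : Cinf) : M → ℂ) = ∑ i ∈ s, ((g i : Cinf) : M → ℂ) :=
    map_sum (ContMDiffMap.coeFnAddMonoidHom : Cinf →+ (M → ℂ)) g s
  rw [show (∑ i ∈ s, g i : Cinf) x = ((∑ i ∈ s, g i : Cinf) : M → ℂ) x from rfl, h,
    Finset.sum_apply]

lemma two_cancel {u v : Cinf} (h : u + u = v + v) : u = v := by
  apply ContMDiffMap.ext; intro x
  have hx : (u + u) x = (v + v) x := by rw [h]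
  have hx' : u x + u x = v x + v x := hx
  have h2 : (2 : ℂ) * u x = (2 : ℂ) * v x := by rw [two_mul, two_mul]; exact hx'
  exact mul_left_cancel₀ two_ne_zero h2

lemma two_cancel0 {u : Cinf} (h : u + u = 0) : u = 0 :=
  two_cancel (by rw [h, add_zero])

/-- multiplication by the constant `1/2`. -/
def halfF (I : ModelWithCorners ℝ EE HH) (M : Type*) [TopologicalSpace M]
    [ChartedSpace HH M] [IsManifold I (⊤ : ℕ∞) M] (f : ContMDiffMap I 𝓘(ℝ, ℂ) M ℂ (⊤ : ℕ∞)) :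
    ContMDiffMap I 𝓘(ℝ, ℂ) M ℂ (⊤ : ℕ∞) :=
  constF I M (1/2) * f

lemma halfF_add (u v : Cinf) : halfF I M (u + v) = halfF I M u + halfF I M v := by
  unfold halfF; rw [mul_add]

lemma halfF_sub (u v : Cinf) : halfF I M (u - v) = halfF I M u - halfF I M v := by
  unfold halfF; rw [mul_sub]

lemma halfF_half (u : Cinf) : halfF I M u + halfF I M u = u :=
  ContMDiffMap.ext fun x => by
    have : halfF I M u x = (1/2 : ℂ) * u x := rfl
    rw [show (halfF I M u + halfF I M u) x = halfF I M u x + halfF I M u x from rfl, this]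
    ring

/-- A family of coefficient operators is (coefficientwise) additive. -/
def Add1 (F : ℕ → Cinf → Cinf) : Prop :=
  ∀ r (u v : Cinf), F r (u + v) = F r u + F r v

lemma Add1.hom {F : ℕ → Cinf → Cinf} (hF : Add1 F) (r : ℕ) : True := trivial

lemma Add1.zero {F : ℕ → Cinf → Cinf} (hF : Add1 F) (r : ℕ) : F r 0 = 0 :=
  (AddMonoidHom.mk' (F r) (hF r)).map_zero

lemma Add1.sub {F : ℕ → Cinf → Cinf} (hF : Add1 F) (r : ℕ) (u v : Cinf) :
    F r (u - v) = F r u - F r v :=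
  map_sub (AddMonoidHom.mk' (F r) (hF r)) u v

lemma Add1.sum {F : ℕ → Cinf → Cinf} (hF : Add1 F) (r : ℕ) {α : Type*} (s : Finset α)
    (g : α → Cinf) : F r (∑ i ∈ s, g i) = ∑ i ∈ s, F r (g i) :=
  map_sum (AddMonoidHom.mk' (F r) (hF r)) g s

/-- The identity operator family. -/
def idF (I : ModelWithCorners ℝ EE HH) (M : Type*) [TopologicalSpace M]
    [ChartedSpace HH M] [IsManifold I (⊤ : ℕ∞) M] : ℕ → ContMDiffMap I 𝓘(ℝ, ℂ) M ℂ (⊤ : ℕ∞) → ContMDiffMap I 𝓘(ℝ, ℂ) M ℂ (⊤ : ℕ∞) :=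
  fun n f => if n = 0 then f else 0

/-- Composition of operator families (Cauchy convolution). -/
def compF (F G : ℕ → Cinf → Cinf) : ℕ → Cinf → Cinf :=
  fun n f => ∑ p ∈ Finset.HasAntidiagonal.antidiagonal n, F p.1 (G p.2 f)

lemma compF_zero (F G : ℕ → Cinf → Cinf) (f : Cinf) : compF F G 0 f = F 0 (G 0 f) := by
  rw [compF, Finset.Nat.antidiagonal_zero, Finset.sum_singleton]

lemma idF_add1 : Add1 (idF I M) := by
  intro r u v
  unfold idF
  split
  · rfl
  · rw [add_zero]

lemma compF_add1 {F G : ℕ → Cinf → Cinf} (hF : Add1 F) (hG : Add1 G) :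
    Add1 (compF F G) := by
  intro r u v
  unfold compF
  rw [← Finset.sum_add_distrib]
  exact Finset.sum_congr rfl fun p _ => by rw [hG, hF]

lemma compF_idF {F : ℕ → Cinf → Cinf} (hF : Add1 F) : compF F (idF I M) = F := by
  funext n f
  unfold compF
  rw [Finset.sum_eq_single (n, 0)]
  · simp [idF]
  · intro p hp hne
    have hmem := Finset.HasAntidiagonal.mem_antidiagonal.mp hp
    have h2 : p.2 ≠ 0 := by
      intro h0
      apply hne
      have : p.1 = n := by omega
      exact Prod.ext this h0
    rw [show idF I M p.2 f = 0 from if_neg h2, hF.zero]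
  · intro hn
    exact absurd (Finset.HasAntidiagonal.mem_antidiagonal.mpr (by omega)) hn

lemma idF_compF (F : ℕ → Cinf → Cinf) : compF (idF I M) F = F := by
  funext n f
  unfold compF
  rw [Finset.sum_eq_single (0, n)]
  · simp [idF]
  · intro p hp hne
    have hmem := Finset.HasAntidiagonal.mem_antidiagonal.mp hp
    have h1 : p.1 ≠ 0 := by
      intro h0
      apply hne
      have : p.2 = n := by omega
      exact Prod.ext h0 this
    exact if_neg h1
  · intro hn
    exact absurd (Finset.HasAntidiagonal.mem_antidiagonal.mpr (by omega)) hn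

lemma sum_ad_ad {β : Type*} [AddCommMonoid β] (n : ℕ) (f : ℕ → ℕ → ℕ → β) :
    ∑ p ∈ Finset.HasAntidiagonal.antidiagonal n, ∑ q ∈ Finset.HasAntidiagonal.antidiagonal p.1, f q.1 q.2 p.2
      = ∑ p ∈ Finset.HasAntidiagonal.antidiagonal n, ∑ q ∈ Finset.HasAntidiagonal.antidiagonal p.2, f p.1 q.1 q.2 := by
  rw [Finset.sum_sigma', Finset.sum_sigma']
  refine Finset.sum_nbij' (fun x => ⟨(x.2.1, x.2.2 + x.1.2), (x.2.2, x.1.2)⟩)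
    (fun x => ⟨(x.1.1 + x.2.1, x.2.2), (x.1.1, x.2.1)⟩) ?_ ?_ ?_ ?_ ?_
  · rintro ⟨⟨p1, p2⟩, ⟨q1, q2⟩⟩ h
    simp only [Finset.mem_sigma, Finset.HasAntidiagonal.mem_antidiagonal] at h ⊢
    exact ⟨by omega, trivial⟩
  · rintro ⟨⟨p1, p2⟩, ⟨q1, q2⟩⟩ h
    simp only [Finset.mem_sigma, Finset.HasAntidiagonal.mem_antidiagonal] at h ⊢
    exact ⟨by omega, trivial⟩
  · rintro ⟨⟨p1, p2⟩, ⟨q1, q2⟩⟩ h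
    simp only [Finset.mem_sigma, Finset.HasAntidiagonal.mem_antidiagonal] at h
    simp only [Sigma.mk.inj_iff, Prod.mk.injEq, heq_eq_eq]
    exact ⟨⟨h.2, trivial⟩, trivial⟩
  · rintro ⟨⟨p1, p2⟩, ⟨q1, q2⟩⟩ h
    simp only [Finset.mem_sigma, Finset.HasAntidiagonal.mem_antidiagonal] at h
    simp only [Sigma.mk.inj_iff, Prod.mk.injEq, heq_eq_eq]
    exact ⟨⟨trivial, h.2⟩, trivial⟩
  · rintro ⟨⟨p1, p2⟩, ⟨q1, q2⟩⟩ h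
    rfl

lemma compF_assoc {F : ℕ → Cinf → Cinf} (hF : Add1 F) (G H : ℕ → Cinf → Cinf) :
    compF (compF F G) H = compF F (compF G H) := by
  funext n f
  show ∑ p ∈ Finset.HasAntidiagonal.antidiagonal n, compF F G p.1 (H p.2 f)
      = ∑ p ∈ Finset.HasAntidiagonal.antidiagonal n, F p.1 (compF G H p.2 f)
  have h1 : ∀ p : ℕ × ℕ, compF F G p.1 (H p.2 f)
      = ∑ q ∈ Finset.HasAntidiagonal.antidiagonal p.1, F q.1 (G q.2 (H p.2 f)) := fun p => rfl
  have h2 : ∀ p : ℕ × ℕ, F p.1 (compF G H p.2 f)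
      = ∑ q ∈ Finset.HasAntidiagonal.antidiagonal p.2, F p.1 (G q.1 (H q.2 f)) := fun p => by
    rw [show compF G H p.2 f = ∑ q ∈ Finset.HasAntidiagonal.antidiagonal p.2, G q.1 (H q.2 f) from rfl,
      hF.sum]
  simp only [h1, h2]
  exact sum_ad_ad n fun i j k => F i (G j (H k f))

lemma opSeries_zero (F : ℕ → Cinf → Cinf) (a : ℕ → Cinf) : opSeries F a 0 = F 0 (a 0) := by
  rw [opSeries, Finset.Nat.antidiagonal_zero, Finset.sum_singleton]

lemma opSeries_add {F : ℕ → Cinf → Cinf} (hF : Add1 F) (a b : ℕ → Cinf) :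
    opSeries F (a + b) = opSeries F a + opSeries F b := by
  funext n
  show opSeries F (a + b) n = opSeries F a n + opSeries F b n
  unfold opSeries
  rw [← Finset.sum_add_distrib]
  exact Finset.sum_congr rfl fun p _ => by rw [Pi.add_apply, hF]

lemma opSeries_idF (a : ℕ → Cinf) : opSeries (idF I M) a = a := by
  funext n
  unfold opSeries
  rw [Finset.sum_eq_single (0, n)]
  · simp [idF]
  · intro p hp hne
    have hmem := Finset.HasAntidiagonal.mem_antidiagonal.mp hp
    have h1 : p.1 ≠ 0 := by
      intro h0
      exact hne (Prod.ext h0 (by omega))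
    exact if_neg h1
  · intro hn
    exact absurd (Finset.HasAntidiagonal.mem_antidiagonal.mpr (by omega)) hn

lemma opSeries_comp {F : ℕ → Cinf → Cinf} (hF : Add1 F) (G : ℕ → Cinf → Cinf)
    (a : ℕ → Cinf) : opSeries (compF F G) a = opSeries F (opSeries G a) := by
  funext n
  show ∑ p ∈ Finset.HasAntidiagonal.antidiagonal n, compF F G p.1 (a p.2)
      = ∑ p ∈ Finset.HasAntidiagonal.antidiagonal n, F p.1 (opSeries G a p.2)
  have h2 : ∀ p : ℕ × ℕ, F p.1 (opSeries G a p.2)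
      = ∑ q ∈ Finset.HasAntidiagonal.antidiagonal p.2, F p.1 (G q.1 (a q.2)) := fun p => by
    rw [show opSeries G a p.2 = ∑ q ∈ Finset.HasAntidiagonal.antidiagonal p.2, G q.1 (a q.2) from rfl, hF.sum]
  simp only [h2]
  exact sum_ad_ad n fun i j k => F i (G j (a k))

/-! #### Right and left inverses of a normalized family -/

/-- Right inverse of a family `T` with `T 0 = id`. -/
def rinvF (T : ℕ → Cinf → Cinf) : ℕ → Cinf → Cinf
  | 0 => fun f => f
  | (n+1) => fun f => -∑ i ∈ Finset.range (n+1), T (i+1) (rinvF T (n-i) f)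
  decreasing_by omega

lemma rinvF_zero (T : ℕ → Cinf → Cinf) (f : Cinf) : rinvF T 0 f = f := by
  simp only [rinvF]

lemma rinvF_succ (T : ℕ → Cinf → Cinf) (n : ℕ) (f : Cinf) :
    rinvF T (n+1) f = -∑ i ∈ Finset.range (n+1), T (i+1) (rinvF T (n-i) f) := by
  simp only [rinvF]

/-- Left inverse of a family `T` with `T 0 = id`. -/
def linvF (T : ℕ → Cinf → Cinf) : ℕ → Cinf → Cinf
  | 0 => fun f => f
  | (n+1) => fun f => -∑ i ∈ Finset.range (n+1), linvF T (n-i) (T (i+1) f)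
  decreasing_by omega

lemma linvF_zero (T : ℕ → Cinf → Cinf) (f : Cinf) : linvF T 0 f = f := by
  simp only [linvF]

lemma linvF_succ (T : ℕ → Cinf → Cinf) (n : ℕ) (f : Cinf) :
    linvF T (n+1) f = -∑ i ∈ Finset.range (n+1), linvF T (n-i) (T (i+1) f) := by
  simp only [linvF]

lemma rinvF_add1 {T : ℕ → Cinf → Cinf} (hT : Add1 T) : Add1 (rinvF T) := by
  intro r
  induction r using Nat.strong_induction_on with
  | _ r ih =>
    match r with
    | 0 => intro u v; rw [rinvF_zero, rinvF_zero, rinvF_zero]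
    | (n+1) =>
      intro u v
      rw [rinvF_succ, rinvF_succ, rinvF_succ, ← neg_add, ← Finset.sum_add_distrib]
      congr 1
      refine Finset.sum_congr rfl fun i hi => ?_
      rw [ih (n-i) (by omega) u v, hT]

lemma linvF_add1 {T : ℕ → Cinf → Cinf} (hT : Add1 T) : Add1 (linvF T) := by
  intro r
  induction r using Nat.strong_induction_on with
  | _ r ih =>
    match r with
    | 0 => intro u v; rw [linvF_zero, linvF_zero, linvF_zero]
    | (n+1) =>
      intro u v
      rw [linvF_succ, linvF_succ, linvF_succ, ← neg_add, ← Finset.sum_add_distrib]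
      congr 1
      refine Finset.sum_congr rfl fun i hi => ?_
      rw [hT, ih (n-i) (by omega)]

lemma comp_rinvF {T : ℕ → Cinf → Cinf} (hT0 : T 0 = id) :
    compF T (rinvF T) = idF I M := by
  funext n f
  match n with
  | 0 =>
    rw [compF_zero, hT0]
    simp only [rinvF]
    rfl
  | (n+1) =>
    show ∑ p ∈ Finset.HasAntidiagonal.antidiagonal (n+1), T p.1 (rinvF T p.2 f) = _
    rw [Finset.Nat.sum_antidiagonal_eq_sum_range_succ_mk, Finset.sum_range_succ']
    have h0 : T 0 (rinvF T (n+1-0) f) = rinvF T (n+1) f := by rw [hT0]; rfl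
    have h1 : ∑ i ∈ Finset.range (n+1), T (i+1) (rinvF T (n+1-(i+1)) f)
        = ∑ i ∈ Finset.range (n+1), T (i+1) (rinvF T (n-i) f) :=
      Finset.sum_congr rfl fun i _ => by rw [show n+1-(i+1) = n-i by omega]
    rw [h0, h1, rinvF_succ, add_neg_cancel]
    rfl

lemma linvF_comp {T : ℕ → Cinf → Cinf} (hT0 : T 0 = id) :
    compF (linvF T) T = idF I M := by
  funext n f
  match n with
  | 0 =>
    rw [compF_zero, hT0]
    simp only [linvF]
    rfl
  | (n+1) =>
    show ∑ p ∈ Finset.HasAntidiagonal.antidiagonal (n+1), linvF T p.1 (T p.2 f) = _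
    rw [Finset.Nat.sum_antidiagonal_eq_sum_range_succ_mk, Finset.sum_range_succ]
    have h0 : linvF T (n+1) (T (n+1-(n+1)) f) = linvF T (n+1) f := by
      rw [show n+1-(n+1) = 0 by omega, hT0]
      rfl
    have h1 : ∑ i ∈ Finset.range (n+1), linvF T i (T (n+1-i) f)
        = ∑ i ∈ Finset.range (n+1), linvF T (n-i) (T (i+1) f) := by
      rw [← Finset.sum_range_reflect]
      refine Finset.sum_congr rfl fun j hj => ?_
      have hj' : j < n+1 := Finset.mem_range.mp hj
      rw [show n+1-1-j = n-j by omega, show n+1-(n-j) = j+1 by omega]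
    rw [h0, h1, linvF_succ, add_neg_cancel]
    rfl

lemma linvF_eq_rinvF {T : ℕ → Cinf → Cinf} (hT : Add1 T) (hT0 : T 0 = id) :
    linvF T = rinvF T := by
  calc linvF T = compF (linvF T) (idF I M) := (compF_idF (linvF_add1 hT)).symm
    _ = compF (linvF T) (compF T (rinvF T)) := by rw [comp_rinvF hT0]
    _ = compF (compF (linvF T) T) (rinvF T) := (compF_assoc (linvF_add1 hT) _ _).symm
    _ = compF (idF I M) (rinvF T) := by rw [linvF_comp hT0]
    _ = rinvF T := idF_compF _

lemma rinvF_comp {T : ℕ → Cinf → Cinf} (hT : Add1 T) (hT0 : T 0 = id) :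
    compF (rinvF T) T = idF I M := by
  rw [← linvF_eq_rinvF hT hT0]; exact linvF_comp hT0

/-! #### Conjugation of operator families -/

/-- Conjugated operator family. -/
def conjF (I : ModelWithCorners ℝ EE HH) (M : Type*) [TopologicalSpace M]
    [ChartedSpace HH M] [IsManifold I (⊤ : ℕ∞) M] (F : ℕ → ContMDiffMap I 𝓘(ℝ, ℂ) M ℂ (⊤ : ℕ∞) → ContMDiffMap I 𝓘(ℝ, ℂ) M ℂ (⊤ : ℕ∞)) :
    ℕ → ContMDiffMap I 𝓘(ℝ, ℂ) M ℂ (⊤ : ℕ∞) → ContMDiffMap I 𝓘(ℝ, ℂ) M ℂ (⊤ : ℕ∞) :=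
  fun r f => cconj I M (F r (cconj I M f))

lemma conjF_add1 {F : ℕ → Cinf → Cinf} (hF : Add1 F) : Add1 (conjF I M F) := by
  intro r u v
  unfold conjF
  rw [cconj_add, hF, cconj_add]

lemma conjF_conjF (F : ℕ → Cinf → Cinf) : conjF I M (conjF I M F) = F := by
  funext r f
  unfold conjF
  rw [cconj_cconj, cconj_cconj]

lemma conjF_idF : conjF I M (idF I M) = idF I M := by
  funext r f
  unfold conjF idF
  split
  · rw [cconj_cconj]
  · rw [cconj_zero]

lemma conjF_comp (F G : ℕ → Cinf → Cinf) :
    conjF I M (compF F G) = compF (conjF I M F) (conjF I M G) := by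
  funext r f
  show cconj I M (∑ p ∈ Finset.HasAntidiagonal.antidiagonal r, F p.1 (G p.2 (cconj I M f)))
      = ∑ p ∈ Finset.HasAntidiagonal.antidiagonal r, conjF I M F p.1 (conjF I M G p.2 f)
  rw [cconj_sum]
  exact Finset.sum_congr rfl fun p _ => by
    unfold conjF
    rw [cconj_cconj]

lemma conj_opSeries (F : ℕ → Cinf → Cinf) (a : ℕ → Cinf) :
    cconjS I M (opSeries F a) = opSeries (conjF I M F) (cconjS I M a) := by
  funext n
  show cconj I M (∑ p ∈ Finset.HasAntidiagonal.antidiagonal n, F p.1 (a p.2)) = _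
  rw [cconj_sum]
  exact Finset.sum_congr rfl fun p _ => by
    show cconj I M (F p.1 (a p.2)) = cconj I M (F p.1 (cconj I M (cconj I M (a p.2))))
    rw [cconj_cconj]

/-! #### Square root of a normalized family -/

/-- Formal square root of a family `S` with `S 0 = id`. -/
def sqrtF (S : ℕ → Cinf → Cinf) : ℕ → Cinf → Cinf
  | 0 => fun f => f
  | (n+1) => fun f =>
      halfF I M (S (n+1) f - ∑ i ∈ Finset.range n, sqrtF S (min (i+1) n) (sqrtF S (n-i) f))
  decreasing_by all_goals omega

lemma sqrtF_zero (S : ℕ → Cinf → Cinf) (f : Cinf) : sqrtF S 0 f = f := by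
  simp only [sqrtF]

lemma sqrtF_succ_min (S : ℕ → Cinf → Cinf) (n : ℕ) (f : Cinf) :
    sqrtF S (n+1) f
      = halfF I M (S (n+1) f
          - ∑ i ∈ Finset.range n, sqrtF S (min (i+1) n) (sqrtF S (n-i) f)) := by
  rw [sqrtF]

lemma sqrtF_succ (S : ℕ → Cinf → Cinf) (n : ℕ) (f : Cinf) :
    sqrtF S (n+1) f
      = halfF I M (S (n+1) f - ∑ i ∈ Finset.range n, sqrtF S (i+1) (sqrtF S (n-i) f)) := by
  rw [sqrtF_succ_min]
  have h : ∑ i ∈ Finset.range n, sqrtF S (min (i+1) n) (sqrtF S (n-i) f)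
      = ∑ i ∈ Finset.range n, sqrtF S (i+1) (sqrtF S (n-i) f) := by
    refine Finset.sum_congr rfl fun i hi => ?_
    have : i < n := Finset.mem_range.mp hi
    rw [Nat.min_eq_left (by omega)]
  rw [h]

lemma sqrtF_add1 {S : ℕ → Cinf → Cinf} (hS : Add1 S) : Add1 (sqrtF S) := by
  intro r
  induction r using Nat.strong_induction_on with
  | _ r ih =>
    match r with
    | 0 => intro u v; rw [sqrtF_zero, sqrtF_zero, sqrtF_zero]
    | (n+1) =>
      intro u v
      rw [sqrtF_succ, sqrtF_succ, sqrtF_succ]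
      have hsum : (∑ i ∈ Finset.range n, sqrtF S (i+1) (sqrtF S (n-i) (u+v)))
          = ∑ i ∈ Finset.range n,
            (sqrtF S (i+1) (sqrtF S (n-i) u) + sqrtF S (i+1) (sqrtF S (n-i) v)) :=
        Finset.sum_congr rfl fun i hi => by
          have hi' : i < n := Finset.mem_range.mp hi
          rw [ih (n-i) (by omega) u v, ih (i+1) (by omega)]
      rw [hS, hsum, Finset.sum_add_distrib, add_sub_add_comm, halfF_add]

lemma sqrtF_comp {S : ℕ → Cinf → Cinf} (hS0 : ∀ f, S 0 f = f) :
    compF (sqrtF S) (sqrtF S) = S := by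
  funext n f
  match n with
  | 0 =>
    rw [compF_zero, hS0, sqrtF_zero, sqrtF_zero]
  | (n+1) =>
    show ∑ p ∈ Finset.HasAntidiagonal.antidiagonal (n+1), sqrtF S p.1 (sqrtF S p.2 f) = S (n+1) f
    rw [Finset.Nat.sum_antidiagonal_eq_sum_range_succ_mk, Finset.sum_range_succ,
      Finset.sum_range_succ']
    have h0 : sqrtF S 0 (sqrtF S (n+1-0) f) = sqrtF S (n+1) f := sqrtF_zero S _
    have hlast : sqrtF S (n+1) (sqrtF S (n+1-(n+1)) f) = sqrtF S (n+1) f := by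
      rw [show n+1-(n+1) = 0 by omega, sqrtF_zero]
    have h1 : ∑ i ∈ Finset.range n, sqrtF S (i+1) (sqrtF S (n+1-(i+1)) f)
        = ∑ i ∈ Finset.range n, sqrtF S (i+1) (sqrtF S (n-i) f) :=
      Finset.sum_congr rfl fun i _ => by rw [show n+1-(i+1) = n-i by omega]
    rw [h0, hlast, h1]
    have hdef : sqrtF S (n+1) f
        = halfF I M (S (n+1) f - ∑ i ∈ Finset.range n, sqrtF S (i+1) (sqrtF S (n-i) f)) :=
      sqrtF_succ S n f
    set m := ∑ i ∈ Finset.range n, sqrtF S (i+1) (sqrtF S (n-i) f) with hm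
    have hhalf : sqrtF S (n+1) f + sqrtF S (n+1) f = S (n+1) f - m := by
      rw [hdef]; exact halfF_half _
    calc m + sqrtF S (n+1) f + sqrtF S (n+1) f
        = m + (sqrtF S (n+1) f + sqrtF S (n+1) f) := by rw [add_assoc]
      _ = m + (S (n+1) f - m) := by rw [hhalf]
      _ = S (n+1) f := by abel

lemma sq_uniq {A B : ℕ → Cinf → Cinf} (hA0 : ∀ f, A 0 f = f) (hB0 : ∀ f, B 0 f = f)
    (h : compF A A = compF B B) : A = B := by
  funext r
  induction r using Nat.strong_induction_on with
  | _ r ih =>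
    match r with
    | 0 => funext f; rw [hA0, hB0]
    | (n+1) =>
      funext f
      have hc : compF A A (n+1) f = compF B B (n+1) f := by rw [h]
      have expand : ∀ (X : ℕ → Cinf → Cinf), (∀ g, X 0 g = g) →
          compF X X (n+1) f
            = (∑ i ∈ Finset.range n, X (i+1) (X (n-i) f)) + X (n+1) f + X (n+1) f := by
        intro X hX0
        show ∑ p ∈ Finset.HasAntidiagonal.antidiagonal (n+1), X p.1 (X p.2 f) = _
        rw [Finset.Nat.sum_antidiagonal_eq_sum_range_succ_mk, Finset.sum_range_succ,
          Finset.sum_range_succ']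
        have h0 : X 0 (X (n+1-0) f) = X (n+1) f := hX0 _
        have hlast : X (n+1) (X (n+1-(n+1)) f) = X (n+1) f := by
          rw [show n+1-(n+1) = 0 by omega, hX0]
        have h1 : ∑ i ∈ Finset.range n, X (i+1) (X (n+1-(i+1)) f)
            = ∑ i ∈ Finset.range n, X (i+1) (X (n-i) f) :=
          Finset.sum_congr rfl fun i _ => by rw [show n+1-(i+1) = n-i by omega]
        rw [h0, hlast, h1]
      rw [expand A hA0, expand B hB0] at hc
      have hmid : ∑ i ∈ Finset.range n, A (i+1) (A (n-i) f)
          = ∑ i ∈ Finset.range n, B (i+1) (B (n-i) f) :=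
        Finset.sum_congr rfl fun i hi => by
          have hi' : i < n := Finset.mem_range.mp hi
          rw [ih (n-i) (by omega), ih (i+1) (by omega)]
      rw [hmid] at hc
      have : A (n+1) f + A (n+1) f = B (n+1) f + B (n+1) f := by
        have := add_left_cancel ((add_assoc _ _ _).symm.trans
          (hc.trans (add_assoc _ _ _)))
        exact this
      exact two_cancel this

/-! #### Structure lemmas for `smulS` -/

lemma tuple3_left {β : Type*} [AddCommMonoid β] (n : ℕ) (f : ℕ → ℕ → ℕ → β) :
    ∑ p ∈ Finset.Nat.antidiagonalTuple 3 n, f (p 0) (p 1) (p 2)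
      = ∑ p ∈ Finset.HasAntidiagonal.antidiagonal n, ∑ q ∈ Finset.HasAntidiagonal.antidiagonal p.2, f q.1 p.1 q.2 := by
  rw [Finset.sum_sigma']
  refine Finset.sum_nbij' (fun p => ⟨(p 1, p 0 + p 2), (p 0, p 2)⟩)
    (fun x => ![x.2.1, x.1.1, x.2.2]) ?_ ?_ ?_ ?_ ?_
  · intro p hp
    rw [Finset.Nat.mem_antidiagonalTuple, Fin.sum_univ_three] at hp
    simp only [Finset.mem_sigma, Finset.HasAntidiagonal.mem_antidiagonal]
    exact ⟨by omega, trivial⟩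
  · rintro ⟨⟨a, m⟩, ⟨k, j⟩⟩ hx
    simp only [Finset.mem_sigma, Finset.HasAntidiagonal.mem_antidiagonal] at hx
    rw [Finset.Nat.mem_antidiagonalTuple, Fin.sum_univ_three]
    show k + a + j = n
    omega
  · intro p hp
    funext i
    fin_cases i <;> rfl
  · rintro ⟨⟨a, m⟩, ⟨k, j⟩⟩ hx
    simp only [Finset.mem_sigma, Finset.HasAntidiagonal.mem_antidiagonal] at hx
    show (⟨(a, k + j), (k, j)⟩ : (_ : ℕ × ℕ) × ℕ × ℕ) = ⟨(a, m), (k, j)⟩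
    simp only [Sigma.mk.inj_iff, Prod.mk.injEq, heq_eq_eq]
    exact ⟨⟨trivial, hx.2⟩, trivial⟩
  · intro p hp
    rfl

lemma tuple3_right {β : Type*} [AddCommMonoid β] (n : ℕ) (f : ℕ → ℕ → ℕ → β) :
    ∑ p ∈ Finset.Nat.antidiagonalTuple 3 n, f (p 0) (p 1) (p 2)
      = ∑ p ∈ Finset.HasAntidiagonal.antidiagonal n, ∑ q ∈ Finset.HasAntidiagonal.antidiagonal p.2, f q.1 q.2 p.1 := by
  rw [Finset.sum_sigma']
  refine Finset.sum_nbij' (fun p => ⟨(p 2, p 0 + p 1), (p 0, p 1)⟩)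
    (fun x => ![x.2.1, x.2.2, x.1.1]) ?_ ?_ ?_ ?_ ?_
  · intro p hp
    rw [Finset.Nat.mem_antidiagonalTuple, Fin.sum_univ_three] at hp
    simp only [Finset.mem_sigma, Finset.HasAntidiagonal.mem_antidiagonal]
    exact ⟨by omega, trivial⟩
  · rintro ⟨⟨a, m⟩, ⟨k, j⟩⟩ hx
    simp only [Finset.mem_sigma, Finset.HasAntidiagonal.mem_antidiagonal] at hx
    rw [Finset.Nat.mem_antidiagonalTuple, Fin.sum_univ_three]
    show k + j + a = n
    omega
  · intro p hp
    funext i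
    fin_cases i <;> rfl
  · rintro ⟨⟨a, m⟩, ⟨k, j⟩⟩ hx
    simp only [Finset.mem_sigma, Finset.HasAntidiagonal.mem_antidiagonal] at hx
    show (⟨(a, k + j), (k, j)⟩ : (_ : ℕ × ℕ) × ℕ × ℕ) = ⟨(a, m), (k, j)⟩
    simp only [Sigma.mk.inj_iff, Prod.mk.injEq, heq_eq_eq]
    exact ⟨⟨trivial, hx.2⟩, trivial⟩
  · intro p hp
    rfl

lemma smulS_zero (C : ℕ → Cinf → Cinf → Cinf) (x y : ℕ → Cinf) :
    smulS C x y 0 = C 0 (x 0) (y 0) := by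
  rw [smulS, Finset.Nat.antidiagonalTuple_zero_right, Finset.sum_singleton]
  rfl

lemma smulS_x_outer (C : ℕ → Cinf → Cinf → Cinf) (x y : ℕ → Cinf) (n : ℕ) :
    smulS C x y n
      = ∑ p ∈ Finset.HasAntidiagonal.antidiagonal n, ∑ q ∈ Finset.HasAntidiagonal.antidiagonal p.2, C q.1 (x p.1) (y q.2) :=
  tuple3_left n fun k i j => C k (x i) (y j)

lemma smulS_y_outer (C : ℕ → Cinf → Cinf → Cinf) (x y : ℕ → Cinf) (n : ℕ) :
    smulS C x y n
      = ∑ p ∈ Finset.HasAntidiagonal.antidiagonal n, ∑ q ∈ Finset.HasAntidiagonal.antidiagonal p.2, C q.1 (x q.2) (y p.1) :=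
  tuple3_right n fun k i j => C k (x i) (y j)

lemma smulS_add_left {C : ℕ → Cinf → Cinf → Cinf}
    (hCl : ∀ r f f' g, C r (f + f') g = C r f g + C r f' g) (x x' y : ℕ → Cinf) :
    smulS C (x + x') y = smulS C x y + smulS C x' y := by
  funext n
  show smulS C (x + x') y n = smulS C x y n + smulS C x' y n
  unfold smulS
  rw [← Finset.sum_add_distrib]
  exact Finset.sum_congr rfl fun p _ => by rw [Pi.add_apply, hCl]

lemma smulS_add_right {C : ℕ → Cinf → Cinf → Cinf}
    (hCr : ∀ r f g g', C r f (g + g') = C r f g + C r f g') (x y y' : ℕ → Cinf) :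
    smulS C x (y + y') = smulS C x y + smulS C x y' := by
  funext n
  show smulS C x (y + y') n = smulS C x y n + smulS C x y' n
  unfold smulS
  rw [← Finset.sum_add_distrib]
  exact Finset.sum_congr rfl fun p _ => by rw [Pi.add_apply, hCr]

/-- The shift (multiplication by λ) on series. -/
def shfS (I : ModelWithCorners ℝ EE HH) (M : Type*) [TopologicalSpace M]
    [ChartedSpace HH M] [IsManifold I (⊤ : ℕ∞) M] (x : ℕ → ContMDiffMap I 𝓘(ℝ, ℂ) M ℂ (⊤ : ℕ∞)) :
    ℕ → ContMDiffMap I 𝓘(ℝ, ℂ) M ℂ (⊤ : ℕ∞) :=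
  fun n => match n with
  | 0 => 0
  | (m+1) => x m

lemma smulS_shf_left {C : ℕ → Cinf → Cinf → Cinf}
    (hCl0 : ∀ r g, C r 0 g = 0) (x y : ℕ → Cinf) :
    smulS C (shfS I M x) y = shfS I M (smulS C x y) := by
  funext n
  match n with
  | 0 =>
    rw [smulS_zero]
    exact hCl0 _ _
  | (n+1) =>
    rw [smulS_x_outer, show shfS I M (smulS C x y) (n+1) = smulS C x y n from rfl,
      smulS_x_outer, Finset.Nat.antidiagonal_succ, Finset.sum_cons, Finset.sum_map]
    have h0 : (∑ q ∈ Finset.HasAntidiagonal.antidiagonal (n+1), C q.1 (shfS I M x (0, n+1).1) (y q.2)) = 0 := by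
      rw [show shfS I M x (0, n+1).1 = 0 from rfl]
      rw [Finset.sum_congr rfl fun q _ => hCl0 q.1 (y q.2)]
      exact Finset.sum_const_zero
    rw [h0, zero_add]
    rfl

lemma smulS_shf_right {C : ℕ → Cinf → Cinf → Cinf}
    (hCr0 : ∀ r g, C r g 0 = 0) (x y : ℕ → Cinf) :
    smulS C x (shfS I M y) = shfS I M (smulS C x y) := by
  funext n
  match n with
  | 0 =>
    rw [smulS_zero]
    exact hCr0 _ _
  | (n+1) =>
    rw [smulS_y_outer, show shfS I M (smulS C x y) (n+1) = smulS C x y n from rfl,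
      smulS_y_outer, Finset.Nat.antidiagonal_succ, Finset.sum_cons, Finset.sum_map]
    have h0 : (∑ q ∈ Finset.HasAntidiagonal.antidiagonal (n+1), C q.1 (x q.2) (shfS I M y (0, n+1).1)) = 0 := by
      rw [show shfS I M y (0, n+1).1 = 0 from rfl]
      rw [Finset.sum_congr rfl fun q _ => hCr0 q.1 (x q.2)]
      exact Finset.sum_const_zero
    rw [h0, zero_add]
    rfl

lemma opSeries_shf {F : ℕ → Cinf → Cinf} (hF0 : ∀ r, F r 0 = 0) (x : ℕ → Cinf) :
    opSeries F (shfS I M x) = shfS I M (opSeries F x) := by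
  funext n
  match n with
  | 0 =>
    rw [opSeries_zero]
    exact hF0 _
  | (n+1) =>
    show ∑ p ∈ Finset.HasAntidiagonal.antidiagonal (n+1), F p.1 (shfS I M x p.2) = opSeries F x n
    rw [Finset.Nat.antidiagonal_succ', Finset.sum_cons, Finset.sum_map]
    rw [show F (n+1, 0).1 (shfS I M x (n+1, 0).2) = 0 from hF0 _]
    rw [zero_add]
    rfl

lemma shf_decomp (x : ℕ → Cinf) (h : x 0 = 0) : x = shfS I M (fun m => x (m+1)) := by
  funext n
  match n with
  | 0 => exact h
  | (n+1) => rfl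

/-! #### The key induction: a square root of a `⋆`-automorphism is a `⋆`-automorphism -/

lemma sqrt_auto {C : ℕ → Cinf → Cinf → Cinf}
    (hCl : ∀ r f f' g, C r (f + f') g = C r f g + C r f' g)
    (hCr : ∀ r f g g', C r f (g + g') = C r f g + C r f g')
    {V : ℕ → Cinf → Cinf} (hV0 : ∀ f, V 0 f = f) (hVadd : Add1 V)
    (hVV : ∀ a b : ℕ → Cinf,
      opSeries V (opSeries V (smulS C a b))
        = smulS C (opSeries V (opSeries V a)) (opSeries V (opSeries V b))) :
    ∀ a b : ℕ → Cinf, opSeries V (smulS C a b) = smulS C (opSeries V a) (opSeries V b) := by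
  have hCl0 : ∀ r g, C r 0 g = 0 := by
    intro r g
    have h := hCl r 0 0 g
    rw [add_zero] at h
    exact (left_eq_add.mp h)
  have hCr0 : ∀ r g, C r g 0 = 0 := by
    intro r g
    have h := hCr r g 0 0
    rw [add_zero] at h
    exact (left_eq_add.mp h)
  have hV0' : ∀ r, V r 0 = 0 := fun r => hVadd.zero r
  -- the defect
  obtain ⟨E, hE⟩ : ∃ E : (ℕ → Cinf) → (ℕ → Cinf) → (ℕ → Cinf), ∀ x y,
      E x y = opSeries V (smulS C x y) - smulS C (opSeries V x) (opSeries V y) :=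
    ⟨_, fun _ _ => rfl⟩
  have hEadd_left : ∀ x x' y, E (x + x') y = E x y + E x' y := by
    intro x x' y
    rw [hE, hE, hE]
    rw [smulS_add_left hCl, opSeries_add hVadd, opSeries_add hVadd, smulS_add_left hCl]
    abel
  have hEadd_right : ∀ x y y', E x (y + y') = E x y + E x y' := by
    intro x y y'
    rw [hE, hE, hE]
    rw [smulS_add_right hCr, opSeries_add hVadd, opSeries_add hVadd, smulS_add_right hCr]
    abel
  have hEshf_left : ∀ x y, E (shfS I M x) y = shfS I M (E x y) := by
    intro x y
    rw [hE, hE]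
    rw [smulS_shf_left hCl0, opSeries_shf hV0', opSeries_shf hV0', smulS_shf_left hCl0]
    funext n
    match n with
    | 0 => show (0 : Cinf) - 0 = 0; rw [sub_zero]
    | (n+1) => rfl
  have hEshf_right : ∀ x y, E x (shfS I M y) = shfS I M (E x y) := by
    intro x y
    rw [hE, hE]
    rw [smulS_shf_right hCr0, opSeries_shf hV0', opSeries_shf hV0', smulS_shf_right hCr0]
    funext n
    match n with
    | 0 => show (0 : Cinf) - 0 = 0; rw [sub_zero]
    | (n+1) => rfl
  -- main induction
  have main : ∀ n, ∀ a b : ℕ → Cinf, E a b n = 0 := by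
    intro n
    induction n using Nat.strong_induction_on with
    | _ n ih =>
      match n with
      | 0 =>
        intro a b
        rw [hE, Pi.sub_apply]
        rw [opSeries_zero, smulS_zero, smulS_zero, opSeries_zero, opSeries_zero,
          hV0, hV0, hV0, sub_self]
      | (n+1) =>
        intro a b
        -- step 1: killing a shifted first argument
        have hkill_left : ∀ x y, E (shfS I M x) y (n+1) = 0 := by
          intro x y
          rw [hEshf_left]
          exact ih n (by omega) x y
        have hkill_right : ∀ x y, E x (shfS I M y) (n+1) = 0 := by
          intro x y
          rw [hEshf_right]
          exact ih n (by omega) x y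
        -- step 2: E is insensitive to applying V to the arguments, at order n+1
        have hVdecomp : ∀ x : ℕ → Cinf,
            opSeries V x = x + shfS I M (fun m => opSeries V x (m+1) - x (m+1)) := by
          intro x
          funext m
          match m with
          | 0 =>
            show opSeries V x 0 = x 0 + 0
            rw [opSeries_zero, hV0, add_zero]
          | (m+1) =>
            show opSeries V x (m+1) = x (m+1) + (opSeries V x (m+1) - x (m+1))
            abel
        have hstep1 : ∀ x y, E (opSeries V x) y (n+1) = E x y (n+1) := by
          intro x y
          rw [hVdecomp x]
          have := hEadd_left x (shfS I M (fun m => opSeries V x (m+1) - x (m+1))) y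
          rw [this]
          show E x y (n+1) + E (shfS I M _) y (n+1) = E x y (n+1)
          rw [hkill_left, add_zero]
        have hstep2 : ∀ x y, E x (opSeries V y) (n+1) = E x y (n+1) := by
          intro x y
          rw [hVdecomp y]
          rw [hEadd_right x y (shfS I M (fun m => opSeries V y (m+1) - y (m+1)))]
          show E x y (n+1) + E x (shfS I M _) (n+1) = E x y (n+1)
          rw [hkill_right, add_zero]
        -- step 3: the square relation
        have hsq : E (opSeries V a) (opSeries V b) + opSeries V (E a b) = 0 := by
          have h1 : opSeries V (smulS C a b) = smulS C (opSeries V a) (opSeries V b) + E a b := by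
            rw [hE]; abel
          have h2 : opSeries V (opSeries V (smulS C a b))
              = opSeries V (smulS C (opSeries V a) (opSeries V b)) + opSeries V (E a b) := by
            rw [h1, opSeries_add hVadd]
          have h3 : opSeries V (smulS C (opSeries V a) (opSeries V b))
              = smulS C (opSeries V (opSeries V a)) (opSeries V (opSeries V b))
                + E (opSeries V a) (opSeries V b) := by
            rw [hE]; abel
          have h4 := hVV a b
          rw [h2, h3] at h4
          have h5 : smulS C (opSeries V (opSeries V a)) (opSeries V (opSeries V b))
              + (E (opSeries V a) (opSeries V b) + opSeries V (E a b))
              = smulS C (opSeries V (opSeries V a)) (opSeries V (opSeries V b)) + 0 := by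
            rw [add_zero, ← add_assoc]
            exact h4
          exact add_left_cancel h5
        have hsqn := congrFun hsq (n+1)
        have hEop : opSeries V (E a b) (n+1) = E a b (n+1) := by
          show ∑ p ∈ Finset.HasAntidiagonal.antidiagonal (n+1), V p.1 (E a b p.2) = E a b (n+1)
          rw [Finset.sum_eq_single (0, n+1)]
          · exact hV0 _
          · intro p hp hne
            have hmem := Finset.HasAntidiagonal.mem_antidiagonal.mp hp
            have h2 : p.2 < n+1 := by
              rcases Nat.lt_or_ge p.2 (n+1) with h | h
              · exact h
              · exfalso; exact hne (Prod.ext (by omega) (by omega))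
            rw [ih p.2 h2 a b, hV0']
          · intro hn
            exact absurd (Finset.HasAntidiagonal.mem_antidiagonal.mpr (by omega)) hn
        have hfin : E a b (n+1) + E a b (n+1) = 0 := by
          have : E (opSeries V a) (opSeries V b) (n+1) + opSeries V (E a b) (n+1) = 0 := hsqn
          rw [hEop, hstep1, hstep2] at this
          exact this
        exact two_cancel0 hfin
  intro a b
  funext n
  have h2 := main n a b
  rw [hE, Pi.sub_apply] at h2
  exact sub_eq_zero.mp h2

end Aux

theorem equivalence_implies_star_equivalence
    (C C' : ℕ → ContMDiffMap I 𝓘(ℝ, ℂ) M ℂ (⊤ : ℕ∞) → ContMDiffMap I 𝓘(ℝ, ℂ) M ℂ (⊤ : ℕ∞) →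
      ContMDiffMap I 𝓘(ℝ, ℂ) M ℂ (⊤ : ℕ∞))
    (hC : IsStarProduct C) (hC' : IsStarProduct C')
    (hHerm : ∀ a b, cconjS I M (smulS C a b) = smulS C (cconjS I M b) (cconjS I M a))
    (hHerm' : ∀ a b, cconjS I M (smulS C' a b) = smulS C' (cconjS I M b) (cconjS I M a))
    (T : ℕ → ContMDiffMap I 𝓘(ℝ, ℂ) M ℂ (⊤ : ℕ∞) → ContMDiffMap I 𝓘(ℝ, ℂ) M ℂ (⊤ : ℕ∞))
    (hT0 : T 0 = id)
    (hTadd : ∀ r u v, T r (u + v) = T r u + T r v)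
    (hTequiv : ∀ a b, opSeries T (smulS C a b) = smulS C' (opSeries T a) (opSeries T b)) :
    ∃ U : ℕ → ContMDiffMap I 𝓘(ℝ, ℂ) M ℂ (⊤ : ℕ∞) → ContMDiffMap I 𝓘(ℝ, ℂ) M ℂ (⊤ : ℕ∞),
      U 0 = id ∧
      (∀ r u v, U r (u + v) = U r u + U r v) ∧
      (∀ a b, opSeries U (smulS C a b) = smulS C' (opSeries U a) (opSeries U b)) ∧
      (∀ a, opSeries U (cconjS I M a) = cconjS I M (opSeries U a)) := by
  obtain ⟨-, hCl, hCr, -, -, -, -, -⟩ := hC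
  -- basic families
  set Tc : ℕ → Cinf → Cinf := conjF I M T with hTc
  set Tinv : ℕ → Cinf → Cinf := rinvF T with hTinv
  set S : ℕ → Cinf → Cinf := compF Tinv Tc with hSdef
  set V : ℕ → Cinf → Cinf := sqrtF S with hVdef
  set U : ℕ → Cinf → Cinf := compF T V with hUdef
  have hTadd' : Add1 T := hTadd
  have hTcAdd : Add1 Tc := conjF_add1 hTadd'
  have hTinvAdd : Add1 Tinv := rinvF_add1 hTadd'
  have hSAdd : Add1 S := compF_add1 hTinvAdd hTcAdd
  have hVAdd : Add1 V := sqrtF_add1 hSAdd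
  have hUAdd : Add1 U := compF_add1 hTadd' hVAdd
  have hTTinv : compF T Tinv = idF I M := comp_rinvF hT0
  have hTinvT : compF Tinv T = idF I M := rinvF_comp hTadd' hT0
  have hTc0 : ∀ f, Tc 0 f = f := by
    intro f
    show cconj I M (T 0 (cconj I M f)) = f
    rw [hT0]
    exact cconj_cconj f
  have hS0 : ∀ f, S 0 f = f := by
    intro f
    rw [hSdef, compF_zero, hTc0, hTinv, rinvF_zero]
  have hV0 : ∀ f, V 0 f = f := fun f => by rw [hVdef, sqrtF_zero]
  -- opSeries versions of the inverse identities
  have hopT_Tinv : ∀ x, opSeries T (opSeries Tinv x) = x := by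
    intro x
    rw [← opSeries_comp hTadd', hTTinv, opSeries_idF]
  have hopTinv_T : ∀ x, opSeries Tinv (opSeries T x) = x := by
    intro x
    rw [← opSeries_comp hTinvAdd, hTinvT, opSeries_idF]
  -- Tc is an equivalence
  have hopTc : ∀ x, opSeries Tc x = cconjS I M (opSeries T (cconjS I M x)) := by
    intro x
    rw [conj_opSeries, cconjS_cconjS]
  have hTc_mul : ∀ a b, opSeries Tc (smulS C a b)
      = smulS C' (opSeries Tc a) (opSeries Tc b) := by
    intro a b
    rw [hopTc, hopTc, hopTc]
    rw [hHerm a b, hTequiv, hHerm']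
  -- Tinv is an equivalence (from C' to C)
  have hTinv_mul : ∀ x y, opSeries Tinv (smulS C' x y)
      = smulS C (opSeries Tinv x) (opSeries Tinv y) := by
    intro x y
    have e1 : x = opSeries T (opSeries Tinv x) := (hopT_Tinv x).symm
    have e2 : y = opSeries T (opSeries Tinv y) := (hopT_Tinv y).symm
    calc opSeries Tinv (smulS C' x y)
        = opSeries Tinv (smulS C' (opSeries T (opSeries Tinv x))
            (opSeries T (opSeries Tinv y))) := by rw [← e1, ← e2]
      _ = opSeries Tinv (opSeries T (smulS C (opSeries Tinv x) (opSeries Tinv y))) := by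
          rw [hTequiv]
      _ = smulS C (opSeries Tinv x) (opSeries Tinv y) := hopTinv_T _
  -- S is an automorphism of ⋆
  have hS_mul : ∀ a b, opSeries S (smulS C a b)
      = smulS C (opSeries S a) (opSeries S b) := by
    intro a b
    rw [hSdef, opSeries_comp hTinvAdd, opSeries_comp hTinvAdd, opSeries_comp hTinvAdd]
    rw [hTc_mul, hTinv_mul]
  -- V squares to S
  have hVV : compF V V = S := sqrtF_comp hS0
  -- V is an automorphism of ⋆
  have hVVop : ∀ a b : ℕ → Cinf,
      opSeries V (opSeries V (smulS C a b))
        = smulS C (opSeries V (opSeries V a)) (opSeries V (opSeries V b)) := by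
    intro a b
    rw [← opSeries_comp hVAdd, ← opSeries_comp hVAdd, ← opSeries_comp hVAdd, hVV]
    exact hS_mul a b
  have hV_mul : ∀ a b, opSeries V (smulS C a b)
      = smulS C (opSeries V a) (opSeries V b) :=
    sqrt_auto hCl hCr hV0 hVAdd hVVop
  -- conjugation algebra
  have hTcTc : conjF I M Tc = T := by rw [hTc, conjF_conjF]
  set Vc : ℕ → Cinf → Cinf := conjF I M V with hVcdef
  set Sc : ℕ → Cinf → Cinf := conjF I M S with hScdef
  set Tic : ℕ → Cinf → Cinf := conjF I M Tinv with hTicdef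
  have hVcAdd : Add1 Vc := conjF_add1 hVAdd
  have hScAdd : Add1 Sc := conjF_add1 hSAdd
  have hTicAdd : Add1 Tic := conjF_add1 hTinvAdd
  have hSc_eq : Sc = compF Tic T := by
    rw [hScdef, hSdef, conjF_comp, hTcTc]
  have hTcTic : compF Tc Tic = idF I M := by
    rw [hTc, hTicdef, ← conjF_comp, hTTinv, conjF_idF]
  have hTicTc : compF Tic Tc = idF I M := by
    rw [hTc, hTicdef, ← conjF_comp, hTinvT, conjF_idF]
  have hScS : compF Sc S = idF I M := by
    rw [hSc_eq, hSdef]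
    calc compF (compF Tic T) (compF Tinv Tc)
        = compF Tic (compF T (compF Tinv Tc)) := compF_assoc hTicAdd _ _
      _ = compF Tic (compF (compF T Tinv) Tc) := by rw [compF_assoc hTadd']
      _ = compF Tic (compF (idF I M) Tc) := by rw [hTTinv]
      _ = compF Tic Tc := by rw [idF_compF]
      _ = idF I M := hTicTc
  have hSSc : compF S Sc = idF I M := by
    rw [hSc_eq, hSdef]
    calc compF (compF Tinv Tc) (compF Tic T)
        = compF Tinv (compF Tc (compF Tic T)) := compF_assoc hTinvAdd _ _
      _ = compF Tinv (compF (compF Tc Tic) T) := by rw [compF_assoc hTcAdd]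
      _ = compF Tinv (compF (idF I M) T) := by rw [hTcTic]
      _ = compF Tinv T := by rw [idF_compF]
      _ = idF I M := hTinvT
  have hVS : compF V S = compF S V := by
    rw [← hVV, compF_assoc hVAdd]
  have hVcSc : compF Vc Sc = compF Sc Vc := by
    have h := congrArg (conjF I M) hVS
    rw [conjF_comp V S, conjF_comp S V] at h
    exact h
  have hVcS : compF Vc S = compF S Vc := by
    calc compF Vc S = compF (idF I M) (compF Vc S) := (idF_compF _).symm
      _ = compF (compF S Sc) (compF Vc S) := by rw [hSSc]
      _ = compF S (compF Sc (compF Vc S)) := compF_assoc hSAdd _ _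
      _ = compF S (compF (compF Sc Vc) S) := by rw [compF_assoc hScAdd]
      _ = compF S (compF (compF Vc Sc) S) := by rw [hVcSc]
      _ = compF S (compF Vc (compF Sc S)) := by rw [compF_assoc hVcAdd]
      _ = compF S (compF Vc (idF I M)) := by rw [hScS]
      _ = compF S Vc := by rw [compF_idF hVcAdd]
  have hVc0 : ∀ f, Vc 0 f = f := by
    intro f
    show cconj I M (V 0 (cconj I M f)) = f
    rw [hV0]
    exact cconj_cconj f
  have hA0 : ∀ f, compF S Vc 0 f = f := by
    intro f
    rw [compF_zero, hVc0, hS0]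
  have hVcVc : compF Vc Vc = Sc := by
    rw [hVcdef, ← conjF_comp, hVV]
  have hAA : compF (compF S Vc) (compF S Vc) = compF V V := by
    calc compF (compF S Vc) (compF S Vc)
        = compF S (compF Vc (compF S Vc)) := compF_assoc hSAdd _ _
      _ = compF S (compF (compF Vc S) Vc) := by rw [compF_assoc hVcAdd]
      _ = compF S (compF (compF S Vc) Vc) := by rw [hVcS]
      _ = compF S (compF S (compF Vc Vc)) := by rw [compF_assoc hSAdd]
      _ = compF S (compF S Sc) := by rw [hVcVc]
      _ = compF S (idF I M) := by rw [hSSc]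
      _ = S := compF_idF hSAdd
      _ = compF V V := hVV.symm
  have hAV : compF S Vc = V := sq_uniq hA0 hV0 hAA
  have hTc_TS : Tc = compF T S := by
    rw [hSdef]
    calc Tc = compF (idF I M) Tc := (idF_compF _).symm
      _ = compF (compF T Tinv) Tc := by rw [hTTinv]
      _ = compF T (compF Tinv Tc) := compF_assoc hTadd' _ _
  have hUc : conjF I M U = U := by
    calc conjF I M U = compF Tc Vc := by rw [hUdef, conjF_comp, ← hTc, ← hVcdef]
      _ = compF (compF T S) Vc := by rw [hTc_TS]
      _ = compF T (compF S Vc) := compF_assoc hTadd' _ _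
      _ = compF T V := by rw [hAV]
      _ = U := hUdef.symm
  -- assemble
  refine ⟨U, ?_, hUAdd, ?_, ?_⟩
  · funext f
    show compF T V 0 f = f
    rw [compF_zero, hV0, hT0]
    rfl
  · intro a b
    rw [hUdef, opSeries_comp hTadd', opSeries_comp hTadd', opSeries_comp hTadd']
    rw [hV_mul, hTequiv]
  · intro a
    have h := conj_opSeries U a
    rw [hUc] at h
    calc opSeries U (cconjS I M a)
        = cconjS I M (cconjS I M (opSeries U (cconjS I M a))) := (cconjS_cconjS _).symm
      _ = cconjS I M (opSeries (conjF I M U) (cconjS I M (cconjS I M a))) := by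
          rw [conj_opSeries]
      _ = cconjS I M (opSeries U a) := by rw [hUc, cconjS_cconjS]

end
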